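/- arXiv:2502.09584 — 2 statements merged into one kernel-verified Lean document; each statement's English description precedes it below -/
import Mathlib

section
/- Let w ∼ w' ∈ Σⁿ be neighboring strings compressed by LZ77 with unbounded sliding window. If B_{i₁} = [q_{i₁}, ℓ_{i₁}, c_{i₁}] and B_{i₂} = [q_{i₂}, ℓ_{i₂}, c_{i₂}] are two distinct type-2 blocks of Compress(w), then (q_{i₁}, ℓ_{i₁}) ≠ (q_{i₂}, ℓ_{i₂}). -/
/-- A single LZ77 block `[q, len, c]`. -/
structure LZBlock (α : Type*) where
  q : ℕ
  len : ℕ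
  c : α

/-- `s_i` (1-indexed start position of the `i`-th block, `i` 0-indexed). -/
def blockStart {α : Type*} (B : List (LZBlock α)) (i : ℕ) : ℕ :=
  1 + ((B.take i).map (fun b => b.len + 1)).sum

/-- `f_i` (1-indexed final position of the `i`-th block, `i` 0-indexed). -/
def blockFin {α : Type*} (B : List (LZBlock α)) (i : ℕ) : ℕ :=
  ((B.take (i + 1)).map (fun b => b.len + 1)).sum

/-- `ℓ_i`, recovered as `f_i - s_i`. -/
def lenAt {α : Type*} (B : List (LZBlock α)) (i : ℕ) : ℕ :=
  blockFin B i - blockStart B i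

/-- Non-overlapping LZ77 parse, sliding window `W`, of the length-`n` string `w`
(1-indexed positions). -/
def IsLZ77Parse {α : Type*} (W n : ℕ) (w : ℕ → α) (B : List (LZBlock α)) : Prop :=
  ((B.map (fun b => b.len + 1)).sum = n) ∧
  ∀ i : Fin B.length,
    ((B.get i).c = w (blockStart B i.1 + (B.get i).len)) ∧
    ((B.get i).len = 0 → (B.get i).q = 0) ∧
    (0 < (B.get i).len →
      1 ≤ (B.get i).q ∧
      blockStart B i.1 ≤ (B.get i).q + W ∧
      (B.get i).q + (B.get i).len ≤ blockStart B i.1 ∧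
      ∀ d < (B.get i).len, w ((B.get i).q + d) = w (blockStart B i.1 + d)) ∧
    (blockStart B i.1 + (B.get i).len + 1 ≤ n →
      ¬ ∃ q', 1 ≤ q' ∧ blockStart B i.1 ≤ q' + W ∧
          q' + (B.get i).len + 1 ≤ blockStart B i.1 ∧
          ∀ d ≤ (B.get i).len, w (q' + d) = w (blockStart B i.1 + d))

/-- LZ77 parse with self-referencing (unbounded window). -/
def IsLZ77SRParse {α : Type*} (n : ℕ) (w : ℕ → α) (B : List (LZBlock α)) : Prop :=
  ((B.map (fun b => b.len + 1)).sum = n) ∧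
  ∀ i : Fin B.length,
    ((B.get i).c = w (blockStart B i.1 + (B.get i).len)) ∧
    ((B.get i).len = 0 → (B.get i).q = 0) ∧
    (0 < (B.get i).len →
      1 ≤ (B.get i).q ∧
      (B.get i).q < blockStart B i.1 ∧
      ∀ d < (B.get i).len, w ((B.get i).q + d) = w (blockStart B i.1 + d)) ∧
    (blockStart B i.1 + (B.get i).len + 1 ≤ n →
      ¬ ∃ q', 1 ≤ q' ∧ q' < blockStart B i.1 ∧
          ∀ d ≤ (B.get i).len, w (q' + d) = w (blockStart B i.1 + d))

/-- `w ∼ w'`: strings of length `n` differing in exactly one position. -/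
def Neighbor {α : Type*} (n : ℕ) (w w' : ℕ → α) : Prop :=
  ∃ j, 1 ≤ j ∧ j ≤ n ∧ w j ≠ w' j ∧ ∀ i, i ≠ j → w i = w' i

/-- `M_i`: the set of (0-indexed) blocks of `B'` that start inside block `i` of `B`. -/
def Mset {α : Type*} (B B' : List (LZBlock α)) (i : ℕ) : Finset ℕ :=
  (Finset.range B'.length).filter
    (fun k => blockStart B i ≤ blockStart B' k ∧ blockStart B' k ≤ blockFin B i)

/-- Indices of type-`m` blocks of `B` (relative to `B'`). -/
def typeSet {α : Type*} (B B' : List (LZBlock α)) (m : ℕ) : Finset ℕ :=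
  (Finset.range B.length).filter (fun i => (Mset B B' i).card = m)

/-- Number of bits used to encode each block. -/
def codeLen (n cardS : ℕ) : ℕ :=
  2 * Nat.clog 2 n + Nat.clog 2 cardS

-- ## auxiliary lemmas

private lemma sumTake_succ (l : List ℕ) (i : ℕ) (h : i < l.length) :
    (l.take (i+1)).sum = (l.take i).sum + l[i] := by
  rw [List.take_succ, List.sum_append, List.getElem?_eq_getElem h]
  simp

private lemma sumTake_mono (l : List ℕ) {i k : ℕ} (h : i ≤ k) :
    (l.take i).sum ≤ (l.take k).sum := by
  induction k with
  | zero => interval_cases i; simp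
  | succ k ih =>
    rcases Nat.lt_succ_iff_lt_or_eq.mp (Nat.lt_succ_of_le h) with h' | h'
    · refine le_trans (ih (by omega)) ?_
      rw [List.take_succ, List.sum_append]
      exact Nat.le_add_right _ _
    · subst h'; exact le_refl _

private lemma take_map_eq {α : Type*} (B : List (LZBlock α)) (i : ℕ) :
    ((B.take i).map (fun b => b.len + 1)).sum
      = ((B.map (fun b => b.len + 1)).take i).sum := by
  rw [List.map_take]

private lemma blockFin_eq {α : Type*} (B : List (LZBlock α)) {i : ℕ} (h : i < B.length) :
    blockFin B i = blockStart B i + (B.get ⟨i, h⟩).len := by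
  unfold blockFin blockStart
  rw [take_map_eq, take_map_eq,
    sumTake_succ _ i (by simpa using h)]
  simp [List.get_eq_getElem]
  omega

private lemma blockStart_succ {α : Type*} (B : List (LZBlock α)) {k : ℕ} (h : k < B.length) :
    blockStart B (k+1) = blockStart B k + (B.get ⟨k, h⟩).len + 1 := by
  unfold blockStart
  rw [take_map_eq, take_map_eq, sumTake_succ _ k (by simpa using h)]
  simp [List.get_eq_getElem]
  omega

private lemma blockStart_mono {α : Type*} (B : List (LZBlock α)) {a b : ℕ} (h : a ≤ b) :
    blockStart B a ≤ blockStart B b := by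
  unfold blockStart
  rw [take_map_eq, take_map_eq]
  exact Nat.add_le_add_left (sumTake_mono _ h) 1

private lemma blockFin_le {α : Type*} (B : List (LZBlock α)) {n : ℕ}
    (hsum : (B.map (fun b => b.len + 1)).sum = n) {i : ℕ} (h : i < B.length) :
    blockFin B i ≤ n := by
  unfold blockFin
  rw [take_map_eq]
  calc ((B.map (fun b => b.len + 1)).take (i+1)).sum
      ≤ ((B.map (fun b => b.len + 1)).take (B.map (fun b => b.len + 1)).length).sum :=
        sumTake_mono _ (by simpa using h)
    _ = n := by rw [List.take_length, hsum]

private lemma fin_lt_start {α : Type*} (B : List (LZBlock α)) {i₁ i₂ : ℕ} (h : i₁ < i₂) :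
    blockFin B i₁ + 1 ≤ blockStart B i₂ := by
  unfold blockFin blockStart
  rw [take_map_eq, take_map_eq]
  have := sumTake_mono (B.map (fun b => b.len + 1)) (show i₁ + 1 ≤ i₂ by omega)
  omega

/-- From `2 ≤ |M_i|`, extract two *consecutive* blocks of `B'` starting inside block `i`. -/
private lemma exists_inner {α : Type*} (B B' : List (LZBlock α)) (i : ℕ)
    (h : 2 ≤ (Mset B B' i).card) :
    ∃ k, k + 1 < B'.length ∧ blockStart B i ≤ blockStart B' k ∧
      blockStart B' (k+1) ≤ blockFin B i := by
  obtain ⟨a, ha, b, hb, hab⟩ := Finset.one_lt_card.mp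
    (show 1 < (Mset B B' i).card from by omega)
  simp only [Mset, Finset.mem_filter, Finset.mem_range] at ha hb
  rcases lt_or_gt_of_ne hab with hlt | hlt
  · exact ⟨a, by omega, ha.2.1,
      le_trans (blockStart_mono B' (show a + 1 ≤ b by omega)) hb.2.2⟩
  · exact ⟨b, by omega, hb.2.1,
      le_trans (blockStart_mono B' (show b + 1 ≤ a by omega)) ha.2.2⟩

/-- If a block `B'_k` is not the last reachable one and an earlier genuine copy of its
content exists in `w`, then the differing position `j` must hit the copy or the block. -/
private lemma cover {α : Type*} {n : ℕ} {w w' : ℕ → α} {B' : List (LZBlock α)}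
    (hB' : IsLZ77Parse n n w' B') {j : ℕ} (hj : ∀ x, x ≠ j → w x = w' x)
    {k : ℕ} (_hk1 : k + 1 < B'.length) (hk : k < B'.length)
    (hfin : blockStart B' (k+1) ≤ n)
    {q₀ : ℕ} (h1 : 1 ≤ q₀)
    (h2 : q₀ + (B'.get ⟨k, hk⟩).len + 1 ≤ blockStart B' k)
    (hmatch : ∀ d ≤ (B'.get ⟨k, hk⟩).len,
      w (q₀ + d) = w (blockStart B' k + d)) :
    ∃ d ≤ (B'.get ⟨k, hk⟩).len,
      j = q₀ + d ∨ j = blockStart B' k + d := by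
  have hsucc : blockStart B' (k+1) = blockStart B' k + (B'.get ⟨k, hk⟩).len + 1 :=
    blockStart_succ B' hk
  have hmax0 := (hB'.2 ⟨k, hk⟩).2.2.2
  have hval : ((⟨k, hk⟩ : Fin B'.length) : ℕ) = k := rfl
  rw [hval] at hmax0
  have hskn : blockStart B' k ≤ n := by omega
  have hmax := hmax0 (by omega)
  by_contra hcon
  push_neg at hcon
  apply hmax
  refine ⟨q₀, h1, by omega, h2, ?_⟩
  intro d hd
  have h3 := hcon d hd
  rw [← hj (q₀ + d) (by omega), ← hj (blockStart B' k + d) (by omega)]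
  exact hmatch d hd

/-- Core argument, for `i₁ < i₂`. -/
private lemma core {α : Type*} (n : ℕ) (w w' : ℕ → α) (j : ℕ)
    (hj : ∀ x, x ≠ j → w x = w' x)
    (B B' : List (LZBlock α))
    (hB : IsLZ77Parse n n w B) (hB' : IsLZ77Parse n n w' B')
    (i₁ i₂ : ℕ) (hi₁ : i₁ < B.length) (hi₂ : i₂ < B.length) (hlt : i₁ < i₂)
    (h₁ : 2 ≤ (Mset B B' i₁).card) (h₂ : 2 ≤ (Mset B B' i₂).card)
    (hq : (B.get ⟨i₂, hi₂⟩).q = (B.get ⟨i₁, hi₁⟩).q)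
    (hl : (B.get ⟨i₂, hi₂⟩).len = (B.get ⟨i₁, hi₁⟩).len) : False := by
  set q := (B.get ⟨i₁, hi₁⟩).q with hqdef
  set ℓ := (B.get ⟨i₁, hi₁⟩).len with hldef
  set s₁ := blockStart B i₁ with hs₁
  set s₂ := blockStart B i₂ with hs₂
  have hf₁ : blockFin B i₁ = s₁ + ℓ := blockFin_eq B hi₁
  have hf₂ : blockFin B i₂ = s₂ + ℓ := by rw [blockFin_eq B hi₂, hl]
  have hf₁n : blockFin B i₁ ≤ n := blockFin_le B hB.1 hi₁
  have hf₂n : blockFin B i₂ ≤ n := blockFin_le B hB.1 hi₂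
  have hs₁s₂ : s₁ + ℓ + 1 ≤ s₂ := by
    have := fin_lt_start B hlt; omega
  -- extract inner B'-blocks
  obtain ⟨k₁, hk₁, hk₁s, hk₁f⟩ := exists_inner B B' i₁ h₁
  obtain ⟨k₂, hk₂, hk₂s, hk₂f⟩ := exists_inner B B' i₂ h₂
  have hk₁' : k₁ < B'.length := by omega
  have hk₂' : k₂ < B'.length := by omega
  set L₁ := (B'.get ⟨k₁, hk₁'⟩).len with hL₁
  set L₂ := (B'.get ⟨k₂, hk₂'⟩).len with hL₂
  have hsucc₁ : blockStart B' (k₁+1) = blockStart B' k₁ + L₁ + 1 :=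
    blockStart_succ B' hk₁'
  have hsucc₂ : blockStart B' (k₂+1) = blockStart B' k₂ + L₂ + 1 :=
    blockStart_succ B' hk₂'
  obtain ⟨δ₁, hδ₁⟩ := Nat.exists_eq_add_of_le hk₁s
  obtain ⟨δ₂, hδ₂⟩ := Nat.exists_eq_add_of_le hk₂s
  have hd₁ : δ₁ + L₁ + 1 ≤ ℓ := by omega
  have hd₂ : δ₂ + L₂ + 1 ≤ ℓ := by omega
  have hℓpos : 0 < ℓ := by omega
  -- copy properties of blocks i₁ and i₂ of B
  obtain ⟨hq1, -, hqs₁, hcopy₁⟩ := (hB.2 ⟨i₁, hi₁⟩).2.2.1 hℓpos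
  obtain ⟨-, -, hqs₂, hcopy₂⟩ := (hB.2 ⟨i₂, hi₂⟩).2.2.1 (by rw [hl]; exact hℓpos)
  have hv₁ : ((⟨i₁, hi₁⟩ : Fin B.length) : ℕ) = i₁ := rfl
  have hv₂ : ((⟨i₂, hi₂⟩ : Fin B.length) : ℕ) = i₂ := rfl
  rw [hv₁] at hqs₁ hcopy₁
  rw [hv₂, hq, hl] at hqs₂ hcopy₂
  rw [← hs₁] at hqs₁ hcopy₁ hδ₁
  rw [← hs₂] at hqs₂ hcopy₂ hδ₂
  -- hcopy₁ : ∀ d < ℓ, w (q + d) = w (s₁ + d);  hcopy₂ : ∀ d < ℓ, w (q + d) = w (s₂ + d)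
  -- Step 1: block i₁, source q + δ₁  ⇒  j < s₂
  have R₁ : ∃ d ≤ L₁, j = (q + δ₁) + d ∨ j = blockStart B' k₁ + d := by
    refine cover hB' hj hk₁ hk₁' (le_trans hk₁f hf₁n) (by omega) (by omega) ?_
    intro d hd
    rw [hδ₁, show q + δ₁ + d = q + (δ₁ + d) by omega,
      show s₁ + δ₁ + d = s₁ + (δ₁ + d) by omega]
    exact hcopy₁ (δ₁ + d) (by omega)
  have hjs₂ : j < s₂ := by
    obtain ⟨d, hd, hcase⟩ := R₁
    rcases hcase with h | h <;> omega
  -- Step 2a: block i₂, source q + δ₂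
  have R₂a : ∃ d ≤ L₂, j = (q + δ₂) + d ∨ j = blockStart B' k₂ + d := by
    refine cover hB' hj hk₂ hk₂' (le_trans hk₂f hf₂n) (by omega) (by omega) ?_
    intro d hd
    rw [hδ₂, show q + δ₂ + d = q + (δ₂ + d) by omega,
      show s₂ + δ₂ + d = s₂ + (δ₂ + d) by omega]
    exact hcopy₂ (δ₂ + d) (by omega)
  -- Step 2b: block i₂, source s₁ + δ₂
  have R₂b : ∃ d ≤ L₂, j = (s₁ + δ₂) + d ∨ j = blockStart B' k₂ + d := by
    refine cover hB' hj hk₂ hk₂' (le_trans hk₂f hf₂n) (by omega) (by omega) ?_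
    intro d hd
    rw [hδ₂, show s₁ + δ₂ + d = s₁ + (δ₂ + d) by omega,
      show s₂ + δ₂ + d = s₂ + (δ₂ + d) by omega]
    rw [← hcopy₁ (δ₂ + d) (by omega), ← hcopy₂ (δ₂ + d) (by omega)]
  obtain ⟨da, hda, hcasea⟩ := R₂a
  obtain ⟨db, hdb, hcaseb⟩ := R₂b
  rcases hcasea with ha | ha <;> rcases hcaseb with hb | hb <;> omega

/-- Claim: uniqueness of offsets of type-2 blocks.
For neighboring strings `w ∼ w'` compressed by LZ77 with unbounded window, if
`B_{i₁}` and `B_{i₂}` are two distinct type-2 blocks of `Compress(w)`, then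
`(q_{i₁}, ℓ_{i₁}) ≠ (q_{i₂}, ℓ_{i₂})`. -/
theorem lz77_typeTwo_offsets_unique {α : Type*} (n : ℕ) (w w' : ℕ → α)
    (hnb : Neighbor n w w')
    (B B' : List (LZBlock α))
    (hB : IsLZ77Parse n n w B) (hB' : IsLZ77Parse n n w' B')
    (i₁ i₂ : ℕ) (hi₁ : i₁ < B.length) (hi₂ : i₂ < B.length) (hne : i₁ ≠ i₂)
    (h₁ : (Mset B B' i₁).card = 2) (h₂ : (Mset B B' i₂).card = 2) :
    ((B.get ⟨i₁, hi₁⟩).q, (B.get ⟨i₁, hi₁⟩).len)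
      ≠ ((B.get ⟨i₂, hi₂⟩).q, (B.get ⟨i₂, hi₂⟩).len) := by
  obtain ⟨j, -, -, -, hj⟩ := hnb
  intro heq
  rw [Prod.mk.injEq] at heq
  rcases Nat.lt_or_ge i₁ i₂ with hlt | hge
  · exact core n w w' j hj B B' hB hB' i₁ i₂ hi₁ hi₂ hlt (by omega) (by omega)
      heq.1.symm heq.2.symm
  · exact core n w w' j hj B B' hB hB' i₂ i₁ hi₂ hi₁ (by omega) (by omega) (by omega)
      heq.1 heq.2
end

section
/- Let w ∼ w' ∈ Σⁿ be neighboring strings with w[j] ≠ w'[j], compressed by LZ77 with unbounded sliding window, and let B₂ denote the set of indices of type-2 blocks of Compress(w). For each ℓ ≥ 0 let B₂^ℓ = {i ∈ B₂ : ℓ_i = ℓ}. If i* ∈ [t] is the (unique) index with s_{i*} ≤ j ≤ f_{i*}, then |B₂^ℓ| ≤ ℓ for every ℓ ≠ ℓ_{i*}, and |B₂^{ℓ_{i*}}| ≤ ℓ_{i*} + 1. -/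
/-- `B₂^ℓ`: indices of type-2 blocks of `B` whose copy length `ℓ_i` equals `ℓ`. -/
def typeTwoOfLen {α : Type*} (B B' : List (LZBlock α)) (ℓ : ℕ) : Finset ℕ :=
  (Finset.range B.length).filter (fun i => (Mset B B' i).card = 2 ∧ lenAt B i = ℓ)

/-! Outside the block `i*` containing the changed position `j`, a type-2 block `B_i` must lie
after `j`: blocks ending before `j` are parsed identically in `w` and `w'`. Such a block
contains a whole block `B'_k` of the other parse, which is a copy of a piece of the source
`w[q_i, q_i + ℓ_i)` of `B_i`; by maximality of `B'_k` that piece must meet `j`, so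
`j + 1 - ℓ_i ≤ q_i ≤ j`. Two such blocks of the same length cannot share the source `q`,
since then `B'_k` could be copied from the earlier of the two, which lies beyond `j`.
Hence `i ↦ q_i` embeds the type-2 blocks of length `ℓ` other than `i*` into an interval
of length `ℓ`. -/

section Blocks

variable {α : Type*} (B : List (LZBlock α))

lemma blockStart_zero : blockStart B 0 = 1 := by
  simp [blockStart]

lemma blockStart_succ_s9 (i : ℕ) : blockStart B (i + 1) = blockFin B i + 1 := by
  unfold blockStart blockFin
  omega

lemma blockFin_eq_blockStart_add {i : ℕ} (hi : i < B.length) :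
    blockFin B i = blockStart B i + B[i].len := by
  simp only [blockStart, blockFin, List.take_add_one, List.getElem?_eq_getElem hi,
    List.map_append, List.sum_append, Option.toList_some, List.map_cons, List.map_nil,
    List.sum_cons, List.sum_nil]
  omega

lemma lenAt_eq {i : ℕ} (hi : i < B.length) : lenAt B i = B[i].len := by
  rw [lenAt, blockFin_eq_blockStart_add B hi]
  omega

lemma blockStart_mono_s9 : Monotone (blockStart B) := fun a b h => by
  simpa only [blockStart, List.map_take] using
    Nat.add_le_add_left (List.monotone_sum_take (B.map fun b => b.len + 1) h) 1

lemma blockFin_lt_blockStart {i k : ℕ} (h : i < k) : blockFin B i < blockStart B k := by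
  have := blockStart_mono_s9 B (Nat.succ_le_of_lt h)
  rw [blockStart_succ_s9] at this
  omega

lemma eq_of_mem_block {i k p : ℕ} (hi₁ : blockStart B i ≤ p) (hi₂ : p ≤ blockFin B i)
    (hk₁ : blockStart B k ≤ p) (hk₂ : p ≤ blockFin B k) : i = k := by
  rcases lt_trichotomy i k with h | h | h
  · have := blockFin_lt_blockStart B h
    omega
  · exact h
  · have := blockFin_lt_blockStart B h
    omega

lemma blockFin_le_sum (i : ℕ) : blockFin B i ≤ (B.map fun b => b.len + 1).sum := by
  have := List.sum_take_add_sum_drop (B.map fun b => b.len + 1) (i + 1)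
  rw [blockFin, List.map_take]
  omega

lemma blockStart_of_length_le {i : ℕ} (h : B.length ≤ i) :
    blockStart B i = 1 + (B.map fun b => b.len + 1).sum := by
  rw [blockStart, List.take_of_length_le h]

end Blocks

section Mset

variable {α : Type*} {B B' : List (LZBlock α)} {i : ℕ}

lemma mem_Mset {k : ℕ} :
    k ∈ Mset B B' i ↔ k < B'.length ∧ blockStart B i ≤ blockStart B' k ∧
      blockStart B' k ≤ blockFin B i := by
  simp only [Mset, Finset.mem_filter, Finset.mem_range]

lemma Mset_eq_singleton_of_block_eq (hi' : i < B'.length)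
    (hs : blockStart B' i = blockStart B i) (hf : blockFin B' i = blockFin B i) :
    Mset B B' i = {i} := by
  ext k
  rw [mem_Mset, Finset.mem_singleton]
  constructor
  · rintro ⟨hk, hk₁, hk₂⟩
    have := blockFin_eq_blockStart_add B' hk
    exact eq_of_mem_block B' le_rfl (by omega) (by omega) (by omega)
  · rintro rfl
    have := blockFin_eq_blockStart_add B' hi'
    exact ⟨hi', by omega, by omega⟩

lemma exists_block_inside_of_two_le_card (h : 2 ≤ (Mset B B' i).card) :
    ∃ k < B'.length, blockStart B i ≤ blockStart B' k ∧ blockFin B' k < blockFin B i := by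
  obtain ⟨a, ha, b, hb, hab⟩ := Finset.one_lt_card.mp h
  rw [mem_Mset] at ha hb
  rcases hab.lt_or_gt with hlt | hlt
  · exact ⟨a, ha.1, ha.2.1, (blockFin_lt_blockStart B' hlt).trans_le hb.2.2⟩
  · exact ⟨b, hb.1, hb.2.1, (blockFin_lt_blockStart B' hlt).trans_le ha.2.2⟩

end Mset

namespace IsLZ77Parse

variable {α : Type*} {W n : ℕ} {w : ℕ → α} {B : List (LZBlock α)}

lemma blockFin_le (h : IsLZ77Parse W n w B) (i : ℕ) : blockFin B i ≤ n :=
  h.1 ▸ blockFin_le_sum B i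

lemma lt_length_of_blockStart_le (h : IsLZ77Parse W n w B) {i : ℕ}
    (hi : blockStart B i ≤ n) : i < B.length := by
  by_contra! hle
  rw [blockStart_of_length_le B hle, h.1] at hi
  omega

lemma copy (h : IsLZ77Parse W n w B) {i : ℕ} (hi : i < B.length) (hpos : 0 < B[i].len) :
    1 ≤ B[i].q ∧ blockStart B i ≤ B[i].q + W ∧ B[i].q + B[i].len ≤ blockStart B i ∧
      ∀ d < B[i].len, w (B[i].q + d) = w (blockStart B i + d) :=
  (h.2 ⟨i, hi⟩).2.2.1 hpos

lemma maximal (h : IsLZ77Parse W n w B) {i : ℕ} (hi : i < B.length) (hn : blockFin B i < n)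
    {q : ℕ} (hq : 1 ≤ q) (hW : blockStart B i ≤ q + W) (hqs : q + B[i].len < blockStart B i)
    (hmatch : ∀ d ≤ B[i].len, w (q + d) = w (blockStart B i + d)) : False := by
  rw [blockFin_eq_blockStart_add B hi] at hn
  exact (h.2 ⟨i, hi⟩).2.2.2 hn ⟨q, hq, hW, hqs, hmatch⟩

end IsLZ77Parse

section AgreeBefore

variable {α : Type*} {W n j : ℕ} {w w' : ℕ → α} {B B' : List (LZBlock α)}

lemma len_le_of_agree_before (hB : IsLZ77Parse W n w B) (hB' : IsLZ77Parse W n w' B')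
    (hagree : ∀ p < j, w p = w' p) {i : ℕ} (hi : i < B.length) (hi' : i < B'.length)
    (hs : blockStart B' i = blockStart B i) (hf : blockFin B i < j) :
    B'[i].len ≤ B[i].len := by
  by_contra! hlt
  obtain ⟨hq, hW, hqs, hmatch⟩ := hB'.copy hi' (by omega)
  have hn := hB'.blockFin_le i
  rw [blockFin_eq_blockStart_add B' hi'] at hn
  have := blockFin_eq_blockStart_add B hi
  refine hB.maximal hi (by omega) hq (by omega) (by omega) fun d hd => ?_
  rw [hagree _ (by omega), hagree _ (by omega), ← hs]
  exact hmatch d (by omega)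

lemma blockFin_eq_of_agree_before (hB : IsLZ77Parse W n w B) (hB' : IsLZ77Parse W n w' B')
    (hagree : ∀ p < j, w p = w' p) {i : ℕ} (hi : i < B.length)
    (hs : blockStart B' i = blockStart B i) (hf : blockFin B i < j) :
    i < B'.length ∧ blockFin B' i = blockFin B i := by
  have hfi := blockFin_eq_blockStart_add B hi
  have hi' : i < B'.length := hB'.lt_length_of_blockStart_le (by
    have := hB.blockFin_le i
    omega)
  have hle := len_le_of_agree_before hB hB' hagree hi hi' hs hf
  have hfi' := blockFin_eq_blockStart_add B' hi'
  have hge := len_le_of_agree_before hB' hB (fun p hp => (hagree p hp).symm) hi' hi hs.symm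
    (by omega)
  exact ⟨hi', by omega⟩

lemma blockStart_eq_of_agree_before (hB : IsLZ77Parse W n w B) (hB' : IsLZ77Parse W n w' B')
    (hagree : ∀ p < j, w p = w' p) :
    ∀ i < B.length, blockFin B i < j → blockStart B' i = blockStart B i
  | 0, _, _ => by rw [blockStart_zero, blockStart_zero]
  | m + 1, hi, hf => by
    have hfm := blockFin_lt_blockStart B (Nat.lt_add_one m)
    have hm : m < B.length := by omega
    have hs := blockStart_eq_of_agree_before hB hB' hagree m hm (by
      have := blockFin_eq_blockStart_add B hi
      omega)
    obtain ⟨-, hfm'⟩ := blockFin_eq_of_agree_before hB hB' hagree hm hs (by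
      have := blockFin_eq_blockStart_add B hi
      omega)
    rw [blockStart_succ_s9, blockStart_succ_s9, hfm']

lemma Mset_eq_singleton_of_agree_before (hB : IsLZ77Parse W n w B)
    (hB' : IsLZ77Parse W n w' B') (hagree : ∀ p < j, w p = w' p) {i : ℕ}
    (hi : i < B.length) (hf : blockFin B i < j) : Mset B B' i = {i} := by
  have hs := blockStart_eq_of_agree_before hB hB' hagree i hi hf
  obtain ⟨hi', hf'⟩ := blockFin_eq_of_agree_before hB hB' hagree hi hs hf
  exact Mset_eq_singleton_of_block_eq hi' hs hf'

end AgreeBefore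

section NeighboringParses

variable {α : Type*} {n j : ℕ} {w w' : ℕ → α} {B B' : List (LZBlock α)}

lemma IsLZ77Parse.false_of_earlier_occurrence_avoiding (hB' : IsLZ77Parse n n w' B')
    (hagree : ∀ p, p ≠ j → w p = w' p) {k : ℕ} (hk : k < B'.length)
    (hkn : blockFin B' k < n) {p : ℕ} (hp : 1 ≤ p) (hps : p + B'[k].len < blockStart B' k)
    (hj : ∀ d ≤ B'[k].len, p + d ≠ j ∧ blockStart B' k + d ≠ j)
    (hocc : ∀ d ≤ B'[k].len, w (p + d) = w (blockStart B' k + d)) : False := by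
  have := blockFin_eq_blockStart_add B' hk
  refine hB'.maximal hk hkn hp (by omega) hps fun d hd => ?_
  rw [← hagree _ (hj d hd).1, ← hagree _ (hj d hd).2]
  exact hocc d hd

lemma source_contains_of_block_inside (hB : IsLZ77Parse n n w B)
    (hB' : IsLZ77Parse n n w' B') (hagree : ∀ p, p ≠ j → w p = w' p) {i k : ℕ}
    (hi : i < B.length) (hk : k < B'.length) (hsk : blockStart B i ≤ blockStart B' k)
    (hfk : blockFin B' k < blockFin B i) (hj : j < blockStart B i) :
    B[i].q ≤ j ∧ j < B[i].q + B[i].len := by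
  have hfi := blockFin_eq_blockStart_add B hi
  have hfk' := blockFin_eq_blockStart_add B' hk
  have hn := hB.blockFin_le i
  obtain ⟨hq, -, hqs, hmatch⟩ := hB.copy hi (by omega)
  by_contra hout
  refine hB'.false_of_earlier_occurrence_avoiding hagree hk (by omega)
    (p := B[i].q + (blockStart B' k - blockStart B i)) (by omega) (by omega)
    (fun d hd => ⟨by omega, by omega⟩) fun d hd => ?_
  rw [add_assoc, hmatch _ (by omega)]
  congr 1
  omega

lemma q_ne_of_block_inside (hB : IsLZ77Parse n n w B) (hB' : IsLZ77Parse n n w' B')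
    (hagree : ∀ p, p ≠ j → w p = w' p) {i i' k : ℕ} (hi : i < B.length)
    (hi' : i' < B.length) (hii' : i < i') (hk : k < B'.length)
    (hsk : blockStart B i' ≤ blockStart B' k) (hfk : blockFin B' k < blockFin B i')
    (hj : j < blockStart B i) (hlen : B[i].len = B[i'].len) : B[i].q ≠ B[i'].q := by
  intro hq
  have hfi := blockFin_eq_blockStart_add B hi
  have hfi' := blockFin_eq_blockStart_add B hi'
  have hfk' := blockFin_eq_blockStart_add B' hk
  have hsep := blockFin_lt_blockStart B hii'
  have hn := hB.blockFin_le i'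
  obtain ⟨-, -, -, hmatch⟩ := hB.copy hi (by omega)
  obtain ⟨-, -, -, hmatch'⟩ := hB.copy hi' (by omega)
  refine hB'.false_of_earlier_occurrence_avoiding hagree hk (by omega)
    (p := blockStart B i + (blockStart B' k - blockStart B i')) (by omega) (by omega)
    (fun d hd => ⟨by omega, by omega⟩) fun d hd => ?_
  rw [add_assoc, ← hmatch _ (by omega), hq, hmatch' _ (by omega)]
  congr 1
  omega

lemma exists_of_mem_typeTwoOfLen_erase (hB : IsLZ77Parse n n w B)
    (hB' : IsLZ77Parse n n w' B') (hagree : ∀ p, p ≠ j → w p = w' p) {istar i ℓ : ℕ}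
    (hs : blockStart B istar ≤ j) (hf : j ≤ blockFin B istar)
    (h : i ∈ (typeTwoOfLen B B' ℓ).erase istar) :
    ∃ hi : i < B.length, B[i].len = ℓ ∧ j < blockStart B i ∧
      ∃ k < B'.length, blockStart B i ≤ blockStart B' k ∧ blockFin B' k < blockFin B i := by
  simp only [Finset.mem_erase, typeTwoOfLen, Finset.mem_filter, Finset.mem_range] at h
  obtain ⟨hne, hi, hcard, hlen⟩ := h
  refine ⟨hi, lenAt_eq B hi ▸ hlen, ?_, exists_block_inside_of_two_le_card hcard.ge⟩
  by_contra! hji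
  rcases lt_or_ge (blockFin B i) j with hfi | hfi
  · rw [Mset_eq_singleton_of_agree_before hB hB' (fun p hp => hagree p hp.ne) hi hfi] at hcard
    simp at hcard
  · exact hne (eq_of_mem_block B hji hfi hs hf)

lemma card_typeTwoOfLen_erase_le (hB : IsLZ77Parse n n w B) (hB' : IsLZ77Parse n n w' B')
    (hagree : ∀ p, p ≠ j → w p = w' p) {istar : ℕ} (hs : blockStart B istar ≤ j)
    (hf : j ≤ blockFin B istar) (ℓ : ℕ) : ((typeTwoOfLen B B' ℓ).erase istar).card ≤ ℓ := by
  let q : ℕ → ℕ := fun i => (B.map LZBlock.q).getD i 0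
  have hq : ∀ i (hi : i < B.length), q i = B[i].q := fun i hi => by
    simp [q, List.getElem?_eq_getElem hi]
  calc _ ≤ (Finset.Ico (j + 1 - ℓ) (j + 1)).card := Finset.card_le_card_of_injOn q ?_ ?_
    _ ≤ ℓ := by simp only [Nat.card_Ico]; omega
  · intro i hmem
    obtain ⟨hi, rfl, hj, k, hk, hsk, hfk⟩ :=
      exists_of_mem_typeTwoOfLen_erase hB hB' hagree hs hf hmem
    have := source_contains_of_block_inside hB hB' hagree hi hk hsk hfk hj
    simp only [Finset.coe_Ico, Set.mem_Ico, hq i hi]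
    omega
  · intro a ha b hb hab
    obtain ⟨ha', hla, hja, ka, hka, hska, hfka⟩ :=
      exists_of_mem_typeTwoOfLen_erase hB hB' hagree hs hf ha
    obtain ⟨hb', hlb, hjb, kb, hkb, hskb, hfkb⟩ :=
      exists_of_mem_typeTwoOfLen_erase hB hB' hagree hs hf hb
    rw [hq a ha', hq b hb'] at hab
    rcases lt_trichotomy a b with hlt | heq | hlt
    · exact absurd hab (q_ne_of_block_inside hB hB' hagree ha' hb' hlt hkb hskb hfkb hja
        (hla.trans hlb.symm))
    · exact heq
    · exact absurd hab.symm (q_ne_of_block_inside hB hB' hagree hb' ha' hlt hka hska hfka hjb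
        (hlb.trans hla.symm))

end NeighboringParses

theorem lz77_typeTwo_len_count_general {α : Type*} (n : ℕ) (w w' : ℕ → α) (j : ℕ)
    (hagree : ∀ i, i ≠ j → w i = w' i)
    (B B' : List (LZBlock α))
    (hB : IsLZ77Parse n n w B) (hB' : IsLZ77Parse n n w' B')
    (istar : ℕ)
    (hs : blockStart B istar ≤ j) (hf : j ≤ blockFin B istar) :
    (∀ ℓ : ℕ, ℓ ≠ lenAt B istar → (typeTwoOfLen B B' ℓ).card ≤ ℓ) ∧
      (typeTwoOfLen B B' (lenAt B istar)).card ≤ lenAt B istar + 1 := by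
  have key := card_typeTwoOfLen_erase_le hB hB' hagree hs hf
  refine ⟨fun ℓ hℓ => ?_, ?_⟩
  · have hnot : istar ∉ typeTwoOfLen B B' ℓ := fun h => hℓ (Finset.mem_filter.mp h).2.2.symm
    simpa only [Finset.erase_eq_of_notMem hnot] using key ℓ
  · have := (typeTwoOfLen B B' (lenAt B istar)).pred_card_le_card_erase (a := istar)
    have := key (lenAt B istar)
    omega

/-- Claim: counting type-2 blocks of each length.
Let `w ∼ w'` differ exactly at position `j`, compressed by LZ77 with unbounded
window, and let `i*` be the index with `s_{i*} ≤ j ≤ f_{i*}`. Then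
`|B₂^ℓ| ≤ ℓ` for every `ℓ ≠ ℓ_{i*}`, and `|B₂^{ℓ_{i*}}| ≤ ℓ_{i*} + 1`. -/
theorem lz77_typeTwo_len_count {α : Type*} (n : ℕ) (w w' : ℕ → α) (j : ℕ)
    (hj1 : 1 ≤ j) (hjn : j ≤ n) (hdiff : w j ≠ w' j)
    (hagree : ∀ i, i ≠ j → w i = w' i)
    (B B' : List (LZBlock α))
    (hB : IsLZ77Parse n n w B) (hB' : IsLZ77Parse n n w' B')
    (istar : ℕ) (histar : istar < B.length)
    (hs : blockStart B istar ≤ j) (hf : j ≤ blockFin B istar) :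
    (∀ ℓ : ℕ, ℓ ≠ lenAt B istar → (typeTwoOfLen B B' ℓ).card ≤ ℓ) ∧
      (typeTwoOfLen B B' (lenAt B istar)).card ≤ lenAt B istar + 1 :=
  lz77_typeTwo_len_count_general n w w' j hagree B B' hB hB' istar hs hf
end
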